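/- Let Q be a graph, T its terminal set, v ∈ V(Q), and suppose Q' is obtained from Q by deleting all edges incident with v and attaching two new degree-1 terminal vertices t_1, t_2 adjacent to v, with T' = T ∪ {t_1, t_2}. Then OPT(Q, T) ≤ OPT(Q', T') + 1 for the deletable-terminal multiway cut problem: from any multiway cut X' of (Q', T') one can obtain a multiway cut of (Q, T) of size at most |X'| containing v, by replacing any chosen t_1, t_2 in X' with v. -/

import Mathlib

variable {V : Type*}

/-- Delete a vertex set `X` from `G`. -/
def SimpleGraph.del (G : SimpleGraph V) (X : Set V) : SimpleGraph V where
  Adj u v := G.Adj u v ∧ u ∉ X ∧ v ∉ X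
  symm := ⟨fun u v h => ⟨h.1.symm, h.2.2, h.2.1⟩⟩
  loopless := ⟨fun v h => h.1.ne rfl⟩

/-- A deletable-terminal multiway cut. -/
def IsDelMWC (G : SimpleGraph V) (T X : Set V) : Prop :=
  ∀ t₁ ∈ T \ X, ∀ t₂ ∈ T \ X, t₁ ≠ t₂ → ¬ (G.del X).Reachable t₁ t₂

/-- Minimum size of a deletable-terminal multiway cut for `(G, T)`. -/
noncomputable def delMwcOpt (G : SimpleGraph V) (T : Set V) : ℕ :=
  sInf {n | ∃ X : Finset V, IsDelMWC G T ↑X ∧ X.card = n}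

/-- The graph obtained from `Q` by deleting all edges incident with `v` and attaching two
pendant vertices `t₁, t₂` adjacent (only) to `v`. -/
def pendantize (Q : SimpleGraph V) (v t₁ t₂ : V) : SimpleGraph V where
  Adj a b := (Q.Adj a b ∧ a ≠ v ∧ b ≠ v) ∨
    (a = v ∧ (b = t₁ ∨ b = t₂) ∧ a ≠ b) ∨ (b = v ∧ (a = t₁ ∨ a = t₂) ∧ a ≠ b)
  symm := by
    constructor
    intro a b h
    rcases h with ⟨h, ha, hb⟩ | ⟨h1, h2, h3⟩ | ⟨h1, h2, h3⟩
    · exact Or.inl ⟨h.symm, hb, ha⟩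
    · exact Or.inr (Or.inr ⟨h1, h2, h3.symm⟩)
    · exact Or.inr (Or.inl ⟨h1, h2, h3.symm⟩)
  loopless := by
    constructor
    intro a h
    rcases h with ⟨h, _, _⟩ | ⟨_, _, h⟩ | ⟨_, _, h⟩
    · exact h.ne rfl
    · exact h rfl
    · exact h rfl

lemma iso_not_reachable {Q : SimpleGraph V} {X : Set V} {t b : V}
    (hiso : ∀ u, ¬ Q.Adj t u) (hne : t ≠ b) : ¬ (Q.del X).Reachable t b := by
  rintro ⟨w⟩
  cases w with
  | nil => exact hne rfl
  | cons h p => exact hiso _ h.1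

/-- attaching two fresh pendant terminals `t₁, t₂` to `v` after removing
all edges at `v`: from any multiway cut `X'` of `(Q', T ∪ {t₁, t₂})` one obtains a
multiway cut of `(Q, T)` of size at most `|X'|` containing `v`; consequently
`OPT(Q, T) ≤ OPT(Q', T') + 1`. -/
theorem pendant_terminals_mwc [DecidableEq V] (Q : SimpleGraph V) (T : Set V) (v t₁ t₂ : V)
    (h1 : v ≠ t₁) (h2 : v ≠ t₂) (h12 : t₁ ≠ t₂)
    (hiso1 : ∀ u, ¬ Q.Adj t₁ u) (hiso2 : ∀ u, ¬ Q.Adj t₂ u)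
    (ht1T : t₁ ∉ T) (ht2T : t₂ ∉ T) :
    (∀ X' : Finset V, IsDelMWC (pendantize Q v t₁ t₂) (T ∪ {t₁, t₂}) ↑X' →
      ∃ X : Finset V, IsDelMWC Q T ↑X ∧ v ∈ X ∧ X.card ≤ X'.card) ∧
    delMwcOpt Q T ≤ delMwcOpt (pendantize Q v t₁ t₂) (T ∪ {t₁, t₂}) + 1 := by
  have main : ∀ X' : Finset V, IsDelMWC (pendantize Q v t₁ t₂) (T ∪ {t₁, t₂}) ↑X' →
      ∃ X : Finset V, IsDelMWC Q T ↑X ∧ v ∈ X ∧ X.card ≤ X'.card := by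
    intro X' hX'
    set Y : Finset V := (X'.erase t₁).erase t₂ with hYdef
    have hYsub : Y ⊆ X' := (Finset.erase_subset _ _).trans (Finset.erase_subset _ _)
    refine ⟨insert v Y, ?_, Finset.mem_insert_self _ _, ?_⟩
    · -- it is a multiway cut of (Q, T)
      intro a ha b hb hab hr
      obtain ⟨haT, haX⟩ := ha
      obtain ⟨hbT, hbX⟩ := hb
      have haX2 : a ∉ insert v Y := by simpa using haX
      have hbX2 : b ∉ insert v Y := by simpa using hbX
      have hat1 : a ≠ t₁ := fun h => ht1T (h ▸ haT)
      have hat2 : a ≠ t₂ := fun h => ht2T (h ▸ haT)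
      have hbt1 : b ≠ t₁ := fun h => ht1T (h ▸ hbT)
      have hbt2 : b ≠ t₂ := fun h => ht2T (h ▸ hbT)
      have haX' : a ∉ X' := fun h => haX2 (Finset.mem_insert_of_mem
        (Finset.mem_erase.mpr ⟨hat2, Finset.mem_erase.mpr ⟨hat1, h⟩⟩))
      have hbX' : b ∉ X' := fun h => hbX2 (Finset.mem_insert_of_mem
        (Finset.mem_erase.mpr ⟨hbt2, Finset.mem_erase.mpr ⟨hbt1, h⟩⟩))
      have hmono : Q.del ↑(insert v Y) ≤ (pendantize Q v t₁ t₂).del ↑X' := by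
        intro x y hxy
        obtain ⟨hadj, hx, hy⟩ := hxy
        have hx2 : x ∉ insert v Y := by simpa using hx
        have hy2 : y ∉ insert v Y := by simpa using hy
        have hxv : x ≠ v := fun h => hx2 (h ▸ Finset.mem_insert_self _ _)
        have hyv : y ≠ v := fun h => hy2 (h ▸ Finset.mem_insert_self _ _)
        have hxt1 : x ≠ t₁ := fun h => hiso1 y (h ▸ hadj)
        have hxt2 : x ≠ t₂ := fun h => hiso2 y (h ▸ hadj)
        have hyt1 : y ≠ t₁ := fun h => hiso1 x (h ▸ hadj.symm)
        have hyt2 : y ≠ t₂ := fun h => hiso2 x (h ▸ hadj.symm)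
        refine ⟨Or.inl ⟨hadj, hxv, hyv⟩, ?_, ?_⟩
        · simpa using fun h => hx2 (Finset.mem_insert_of_mem
            (Finset.mem_erase.mpr ⟨hxt2, Finset.mem_erase.mpr ⟨hxt1, h⟩⟩))
        · simpa using fun h => hy2 (Finset.mem_insert_of_mem
            (Finset.mem_erase.mpr ⟨hyt2, Finset.mem_erase.mpr ⟨hyt1, h⟩⟩))
      exact hX' a ⟨Or.inl haT, by simpa using haX'⟩ b ⟨Or.inl hbT, by simpa using hbX'⟩
        hab (hr.mono hmono)
    · -- cardinality bound
      by_cases hv : v ∈ X'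
      · have hvY : v ∈ Y := Finset.mem_erase.mpr ⟨h2, Finset.mem_erase.mpr ⟨h1, hv⟩⟩
        rw [Finset.insert_eq_self.mpr hvY]
        exact Finset.card_le_card hYsub
      · by_cases ht1 : t₁ ∈ X'
        · have h1' : 1 ≤ X'.card := Finset.card_pos.mpr ⟨t₁, ht1⟩
          calc (insert v Y).card ≤ Y.card + 1 := Finset.card_insert_le _ _
            _ ≤ (X'.erase t₁).card + 1 := by
                exact Nat.add_le_add_right (Finset.card_le_card (Finset.erase_subset _ _)) 1
            _ = (X'.card - 1) + 1 := by rw [Finset.card_erase_of_mem ht1]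
            _ = X'.card := Nat.succ_pred_eq_of_pos h1'
        · by_cases ht2 : t₂ ∈ X'
          · have h1' : 1 ≤ X'.card := Finset.card_pos.mpr ⟨t₂, ht2⟩
            have hsub : Y ⊆ X'.erase t₂ := by
              intro x hx
              have hx' := Finset.mem_erase.mp hx
              exact Finset.mem_erase.mpr ⟨hx'.1, (Finset.mem_erase.mp hx'.2).2⟩
            calc (insert v Y).card ≤ Y.card + 1 := Finset.card_insert_le _ _
              _ ≤ (X'.erase t₂).card + 1 := Nat.add_le_add_right (Finset.card_le_card hsub) 1
              _ = (X'.card - 1) + 1 := by rw [Finset.card_erase_of_mem ht2]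
              _ = X'.card := Nat.succ_pred_eq_of_pos h1'
          · -- none of v, t₁, t₂ in X' : contradiction with X' being a multiway cut
            exfalso
            have e1 : ((pendantize Q v t₁ t₂).del ↑X').Adj t₁ v :=
              ⟨Or.inr (Or.inr ⟨rfl, Or.inl rfl, fun h => h1 h.symm⟩), by simpa using ht1,
                by simpa using hv⟩
            have e2 : ((pendantize Q v t₁ t₂).del ↑X').Adj v t₂ :=
              ⟨Or.inr (Or.inl ⟨rfl, Or.inr rfl, h2⟩), by simpa using hv, by simpa using ht2⟩
            exact hX' t₁ ⟨Or.inr (by simp), by simpa using ht1⟩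
              t₂ ⟨Or.inr (by simp), by simpa using ht2⟩ h12
              (e1.reachable.trans e2.reachable)
  refine ⟨main, ?_⟩
  by_cases hS : {n | ∃ X : Finset V, IsDelMWC Q T ↑X ∧ X.card = n}.Nonempty
  · obtain ⟨n, X, hX, rfl⟩ := hS
    -- construct a multiway cut of the pendantized graph, so its OPT set is nonempty
    have hcut : IsDelMWC (pendantize Q v t₁ t₂) (T ∪ {t₁, t₂}) ↑(insert t₁ (insert v X)) := by
      intro a ha b hb hab hr
      obtain ⟨haT, haX⟩ := ha
      obtain ⟨hbT, hbX⟩ := hb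
      have haX2 : a ∉ insert t₁ (insert v X) := by simpa using haX
      have hbX2 : b ∉ insert t₁ (insert v X) := by simpa using hbX
      have hav : a ≠ v := fun h => haX2 (h ▸ Finset.mem_insert_of_mem (Finset.mem_insert_self _ _))
      have hbv : b ≠ v := fun h => hbX2 (h ▸ Finset.mem_insert_of_mem (Finset.mem_insert_self _ _))
      have hat1 : a ≠ t₁ := fun h => haX2 (h ▸ Finset.mem_insert_self _ _)
      have hbt1 : b ≠ t₁ := fun h => hbX2 (h ▸ Finset.mem_insert_self _ _)
      have hmono : (pendantize Q v t₁ t₂).del ↑(insert t₁ (insert v X)) ≤ Q.del ↑X := by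
        intro x y hxy
        obtain ⟨hadj, hx, hy⟩ := hxy
        have hx2 : x ∉ insert t₁ (insert v X) := by simpa using hx
        have hy2 : y ∉ insert t₁ (insert v X) := by simpa using hy
        have hxv : x ≠ v := fun h =>
          hx2 (h ▸ Finset.mem_insert_of_mem (Finset.mem_insert_self _ _))
        have hyv : y ≠ v := fun h =>
          hy2 (h ▸ Finset.mem_insert_of_mem (Finset.mem_insert_self _ _))
        rcases hadj with ⟨hQ, _, _⟩ | ⟨hxv', _, _⟩ | ⟨hyv', _, _⟩
        · refine ⟨hQ, ?_, ?_⟩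
          · simpa using fun h =>
              hx2 (Finset.mem_insert_of_mem (Finset.mem_insert_of_mem h))
          · simpa using fun h =>
              hy2 (Finset.mem_insert_of_mem (Finset.mem_insert_of_mem h))
        · exact absurd hxv' hxv
        · exact absurd hyv' hyv
      have hr' := hr.mono hmono
      rcases eq_or_ne a t₂ with rfl | hat2
      · exact iso_not_reachable hiso2 hab hr'
      rcases eq_or_ne b t₂ with rfl | hbt2
      · exact iso_not_reachable hiso2 hab.symm hr'.symm
      have haT' : a ∈ T := by
        rcases haT with h | h
        · exact h
        · simp only [Set.mem_insert_iff, Set.mem_singleton_iff] at h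
          rcases h with h | h
          · exact absurd h hat1
          · exact absurd h hat2
      have hbT' : b ∈ T := by
        rcases hbT with h | h
        · exact h
        · simp only [Set.mem_insert_iff, Set.mem_singleton_iff] at h
          rcases h with h | h
          · exact absurd h hbt1
          · exact absurd h hbt2
      have haX3 : a ∉ X := fun h =>
        haX2 (Finset.mem_insert_of_mem (Finset.mem_insert_of_mem h))
      have hbX3 : b ∉ X := fun h =>
        hbX2 (Finset.mem_insert_of_mem (Finset.mem_insert_of_mem h))
      exact hX a ⟨haT', by simpa using haX3⟩ b ⟨hbT', by simpa using hbX3⟩ hab hr'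
    have hS' : {n | ∃ X'' : Finset V,
        IsDelMWC (pendantize Q v t₁ t₂) (T ∪ {t₁, t₂}) ↑X'' ∧ X''.card = n}.Nonempty :=
      ⟨_, insert t₁ (insert v X), hcut, rfl⟩
    obtain ⟨X', hX', hcard⟩ := Nat.sInf_mem hS'
    obtain ⟨X0, hX0, _, hle⟩ := main X' hX'
    calc delMwcOpt Q T ≤ X0.card := Nat.sInf_le ⟨X0, hX0, rfl⟩
      _ ≤ X'.card := hle
      _ = delMwcOpt (pendantize Q v t₁ t₂) (T ∪ {t₁, t₂}) := hcard
      _ ≤ _ + 1 := Nat.le_succ _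
  · rw [delMwcOpt, Set.not_nonempty_iff_eq_empty.mp hS, Nat.sInf_empty]
    exact Nat.zero_le _
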